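/- (Double centralizer theorem over local rings, type A instance.) Let R be a commutative local ring, let n ≥ 3, and let g ∈ SL_n(R). Suppose that g commutes with every transvection t_{kl}(1) = 1 + E_{kl} with k ≠ l, k ≠ 2 and l ≠ 1 (indices 1-based). Then there exist ω ∈ R and r ∈ R with ω^n = 1 such that g = ω • (1 + r • E_{12}). -/

import Mathlib

/-!
Commuting with `1 + E_{kl}` is the same as commuting with `E_{kl}`, which forces `g k k = g l l`
and kills column `k` and row `l` of `g` off the diagonal. Column `k ≠ 2` is reached through
`E_{k2}`, row `l ≠ 1` through `E_{kl}` with `k ∉ {2, l}` (this is where `n ≥ 3` enters), and the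
diagonal through `E_{1d}`. What survives is `g = ω + y E_{12}`, which is upper triangular, so
`1 = det g = ω ^ n`; hence `ω` is a unit and `g = ω (1 + ω⁻¹ y E_{12})`.
-/

open Matrix

theorem Fintype.exists_ne_ne_of_two_lt_card {α : Type*} [Fintype α] [DecidableEq α]
    (h : 2 < Fintype.card α) (a b : α) : ∃ c : α, c ≠ a ∧ c ≠ b := by
  have hlt : ({a, b} : Finset α).card < Finset.univ.card :=
    Finset.card_le_two.trans_lt (h.trans_eq Finset.card_univ.symm)
  obtain ⟨c, -, hc⟩ := Finset.exists_mem_notMem_of_card_lt_card hlt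
  exact ⟨c, by simpa [not_or] using hc⟩

theorem Commute.of_one_add_right {R : Type*} [Ring R] {a b : R} (h : Commute a (1 + b)) :
    Commute a b := by
  simpa using h.sub_right (Commute.one_right a)

namespace Matrix

variable {n R : Type*} [Fintype n] [DecidableEq n] [CommRing R]

theorem eq_scalar_add_single_of_commute_single {i j : n} (hij : i ≠ j)
    (hcard : 2 < Fintype.card n)
    {M : Matrix n n R} (hM : ∀ k l, k ≠ l → k ≠ j → l ≠ i → Commute (single k l 1) M) :
    M = scalar n (M i i) + single i j (M i j) := by
  ext a b
  by_cases hab : a = b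
  · subst hab
    by_cases hai : a = i
    · subst hai; simp [hij.symm]
    · simp [Ne.symm hai, diag_eq_of_commute_single (hM i a (Ne.symm hai) hij hai)]
  by_cases hai : a = i
  · subst hai
    by_cases hbj : b = j
    · subst hbj; simp [hab]
    · simp [hab, Ne.symm hbj, col_eq_zero_of_commute_single (hM b j hbj hbj hij.symm) hab]
  · obtain ⟨k, hka, hkj⟩ := Fintype.exists_ne_ne_of_two_lt_card hcard a j
    simp [hab, Ne.symm hai,
      row_eq_zero_of_commute_single (hM k a hka hkj hai) (Ne.symm hab)]

theorem det_scalar_add_single_of_lt [LinearOrder n] {i j : n} (hij : i < j) (ω y : R) :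
    det (scalar n ω + single i j y) = ω ^ Fintype.card n := by
  have hupper : (scalar n ω + single i j y).IsUpperTriangular := by
    intro a b hba
    have hab : a ≠ b := hba.ne'
    have : ¬(i = a ∧ j = b) := by rintro ⟨rfl, rfl⟩; exact hij.not_gt hba
    simp [hab, this]
  have hdiag (a : n) : ¬(i = a ∧ j = a) := fun ⟨hia, hja⟩ => hij.ne (hia.trans hja.symm)
  rw [det_of_isUpperTriangular hupper]
  simp [hdiag]

theorem scalar_add_single_eq_smul_one_add {ω u : R} (hu : ω * u = 1) (i j : n) (y : R) :
    scalar n ω + single i j y = ω • (1 + (u * y) • single i j 1) := by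
  rw [smul_add, smul_smul, ← mul_assoc, hu, one_mul, smul_single, smul_eq_mul, mul_one,
    smul_one_eq_diagonal, scalar_apply]

end Matrix

/-- Double centralizer theorem over a commutative local ring, type A instance: if
`g ∈ SL_n(R)` (`n ≥ 3`) commutes with all elementary transvections `t_{kl}(1) = 1 + E_{kl}`
with `k ≠ l`, `k ≠ 2`, `l ≠ 1` (1-based indices), then `g = ω • t_{12}(r)` for some scalar
`ω` with `ω^n = 1` and some `r ∈ R`. -/
theorem double_centralizer_local_typeA {R : Type*} [CommRing R] {n : ℕ}
    (hn : 3 ≤ n) (g : Matrix.SpecialLinearGroup (Fin n) R)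
    (hg : ∀ k l : Fin n, k ≠ l → k ≠ ⟨1, by omega⟩ → l ≠ ⟨0, by omega⟩ →
      (g : Matrix (Fin n) (Fin n) R) * (1 + Matrix.single k l 1) =
        (1 + Matrix.single k l 1) * (g : Matrix (Fin n) (Fin n) R)) :
    ∃ ω r : R, ω ^ n = 1 ∧
      (g : Matrix (Fin n) (Fin n) R) =
        ω • (1 + r • Matrix.single (⟨0, by omega⟩ : Fin n) (⟨1, by omega⟩ : Fin n) 1) := by
  have hij : (⟨0, by omega⟩ : Fin n) < ⟨1, by omega⟩ := Fin.mk_lt_mk.mpr one_pos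
  have hform := eq_scalar_add_single_of_commute_single hij.ne (by rw [Fintype.card_fin]; omega)
    fun k l hkl hk hl => (Commute.of_one_add_right (hg k l hkl hk hl)).symm
  set ω := (g : Matrix (Fin n) (Fin n) R) ⟨0, by omega⟩ ⟨0, by omega⟩
  set y := (g : Matrix (Fin n) (Fin n) R) ⟨0, by omega⟩ ⟨1, by omega⟩
  have hωn : ω ^ n = 1 := by
    rw [← g.det_coe, hform, det_scalar_add_single_of_lt hij, Fintype.card_fin]
  refine ⟨ω, ω ^ (n - 1) * y, hωn, hform.trans (scalar_add_single_eq_smul_one_add ?_ _ _ _)⟩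
  rw [← pow_succ', Nat.sub_add_cancel (by omega), hωn]
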